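/- Let G be a simple graph with no ds-completable card, let i, j be disjoint vertex sets with j ⊆ V∖i, and suppose j contains no bad vertex (no vertex of j has degree d such that some vertex of G has degree d−1). Then the number of edges between i and j is at most m_i − n_i, where m_i is the sum of degrees of vertices in i and n_i = |i|. -/

import Mathlib

open SimpleGraph Finset
open scoped Classical

variable {V : Type*}

/-- The degree of a vertex `u` in a simple graph `G`. -/
noncomputable def deg (G : SimpleGraph V) (u : V) : ℕ := (G.neighborSet u).ncard

/-- The degree of `u` in the card `G − v` (the vertex-deleted subgraph at `v`). -/
noncomputable def cardDeg (G : SimpleGraph V) (v u : V) : ℕ := (G.neighborSet u \ {v}).ncard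

/-- The card `G − v` is ds-completable: for each degree `d`, the vertices of degree `d`
in `G − v` are either all neighbours of `v` in `G` or all non-neighbours of `v` in `G`. -/
def DsCompletable (G : SimpleGraph V) (v : V) : Prop :=
  ∀ d : ℕ, (∀ u, u ≠ v → cardDeg G v u = d → G.Adj v u) ∨
           (∀ u, u ≠ v → cardDeg G v u = d → ¬ G.Adj v u)

/-- A vertex is bad if the graph contains a vertex of degree one less. -/
def Bad (G : SimpleGraph V) (v : V) : Prop := ∃ w, deg G w + 1 = deg G v

/-- A vertex is dull if the graph contains a vertex of degree one more. -/
def Dull (G : SimpleGraph V) (v : V) : Prop := ∃ w, deg G w = deg G v + 1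

/-- ε(s,t): the number of stubs on `s` used by edges from `s` to `t`
(for disjoint `s`, `t` this is the number of edges between them; for `s = t`
it is twice the number of edges inside `s`). -/
noncomputable def stubs (G : SimpleGraph V) (s t : Finset V) : ℕ :=
  ((s ×ˢ t).filter fun p => G.Adj p.1 p.2).card

/-- A vertex set is neighbourly if no vertex outside the set has a degree one less
than that of a vertex in the set. -/
def Neighbourly (G : SimpleGraph V) (K : Finset V) : Prop :=
  ∀ u ∉ K, ∀ w ∈ K, deg G u + 1 ≠ deg G w

/-- A vertex set is `d`-neighbourly if it contains a vertex `v` of degree `d` such that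
no vertex outside the set has a degree one less than that of any member other than `v`. -/
def DNeighbourly (G : SimpleGraph V) (d : ℕ) (K : Finset V) : Prop :=
  ∃ v ∈ K, deg G v = d ∧ ∀ u ∉ K, ∀ w ∈ K, w ≠ v → deg G u + 1 ≠ deg G w

lemma cardDeg_add_one_of_adj {G : SimpleGraph V} [G.LocallyFinite] {v u : V} (h : G.Adj v u) :
    cardDeg G v u + 1 = deg G u :=
  Set.ncard_sdiff_singleton_add_one h.symm (G.neighborSet u).toFinite

lemma cardDeg_of_not_adj {G : SimpleGraph V} {v u : V} (h : ¬ G.Adj v u) :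
    cardDeg G v u = deg G u :=
  congrArg Set.ncard (Set.sdiff_singleton_eq_self fun hv => h hv.symm)

lemma deg_eq_card_neighborFinset (G : SimpleGraph V) [G.LocallyFinite] (v : V) :
    deg G v = #(G.neighborFinset v) := by
  rw [deg, Set.ncard_eq_toFinset_card', ← G.neighborFinset_def]

/-- A non-neighbour of `v` with degree `d` in `G − v` has degree `d` in `G`, so a neighbour
with the same card degree, which has degree `d + 1`, would be bad. -/
lemma dsCompletable_of_forall_adj_not_bad {G : SimpleGraph V} [G.LocallyFinite] {v : V}
    (hgood : ∀ w, G.Adj v w → ¬ Bad G w) : DsCompletable G v := by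
  intro d
  by_cases hnon : ∃ u, u ≠ v ∧ cardDeg G v u = d ∧ ¬ G.Adj v u
  · obtain ⟨u', -, hu'd, hnadj⟩ := hnon
    right
    intro u _ hud hadj
    have hdeg := cardDeg_add_one_of_adj hadj
    rw [cardDeg_of_not_adj hnadj] at hu'd
    exact hgood u hadj ⟨u', by omega⟩
  · left
    intro u hu hud
    by_contra hnadj
    exact hnon ⟨u, hu, hud, hnadj⟩

lemma exists_adj_notMem_of_not_dsCompletable {G : SimpleGraph V} [G.LocallyFinite] {v : V}
    (hv : ¬ DsCompletable G v) {j : Finset V} (hj : ∀ w ∈ j, ¬ Bad G w) :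
    ∃ w, G.Adj v w ∧ w ∉ j := by
  contrapose! hv
  exact dsCompletable_of_forall_adj_not_bad fun w hw => hj w (hv w hw)

lemma card_filter_adj_lt_deg {G : SimpleGraph V} [G.LocallyFinite] {v w : V} {t : Finset V}
    (hw : G.Adj v w) (hwt : w ∉ t) : #(t.filter (G.Adj v)) < deg G v := by
  rw [deg_eq_card_neighborFinset]
  refine card_lt_card ((ssubset_iff_of_subset fun x hx => ?_).2 ⟨w, ?_, ?_⟩)
  · exact (G.mem_neighborFinset v x).2 (mem_filter.1 hx).2
  · exact (G.mem_neighborFinset v w).2 hw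
  · exact fun hwf => hwt (mem_filter.1 hwf).1

lemma stubs_eq_sum_card_filter_adj (G : SimpleGraph V) (s t : Finset V) :
    stubs G s t = ∑ v ∈ s, #(t.filter (G.Adj v)) := by
  rw [stubs, card_filter, sum_product]
  exact sum_congr rfl fun v _ => (card_filter _ _).symm

theorem stmt11_general [Fintype V] (G : SimpleGraph V)
    (h : ∀ v : V, ¬ DsCompletable G v) (i j : Finset V)
    (hj : ∀ w ∈ j, ¬ Bad G w) :
    stubs G i j + i.card ≤ ∑ v ∈ i, deg G v := by
  calc stubs G i j + #i = ∑ v ∈ i, (#(j.filter (G.Adj v)) + 1) := by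
        rw [stubs_eq_sum_card_filter_adj, sum_add_distrib, card_eq_sum_ones]
    _ ≤ ∑ v ∈ i, deg G v := sum_le_sum fun v _ => by
        obtain ⟨w, hw, hwj⟩ := exists_adj_notMem_of_not_dsCompletable (h v) hj
        exact card_filter_adj_lt_deg hw hwj

/-- In a graph with no ds-completable card, the edges from `i` to a good set `j` number at
most `m_i − n_i`. -/
theorem stmt11 [Fintype V] (G : SimpleGraph V)
    (h : ∀ v : V, ¬ DsCompletable G v) (i j : Finset V) (hd : Disjoint i j)
    (hj : ∀ w ∈ j, ¬ Bad G w) :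
    stubs G i j + i.card ≤ ∑ v ∈ i, deg G v :=
  stmt11_general G h i j hj
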